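/- arXiv:2407.15628 — 3 statements merged into one kernel-verified Lean document; each statement's English description precedes it below -/
import Mathlib

section
/- For all integers n ≥ 0, a_3(7n+4) ≡ 0 (mod 7), where a_3(n) is the number of generalized cubic partitions of n with even parts in 3 colors. -/
/-- `f m` is the infinite product `∏_{k ≥ 1} (1 - q^(m k))` as a formal power series in `q`
over `ℤ`, defined coefficientwise (the `n`-th coefficient of the partial product
`∏_{k=1}^{n+1} (1 - q^(m k))` is already stable). -/
noncomputable def f (m : ℕ) : PowerSeries ℤ :=
  PowerSeries.mk fun n => PowerSeries.coeff n
    (∏ k ∈ Finset.range (n + 1), (1 - (PowerSeries.X : PowerSeries ℤ) ^ (m * (k + 1))))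

/-!
Reducing modulo 7, `f₂⁷ = f₁₄`, so `(∑ a₃(n) qⁿ) · f₁₄ = f₂⁵ / f₁ = (f₂² / f₁) · f₂³`. By Gauss and
Jacobi, `f₂² / f₁ = ∑ q^{j(j+1)/2}` and `f₂³ = ∑ (-1)ᵏ (2k+1) q^{k(k+1)}`. If
`j(j+1)/2 + k(k+1) ≡ 4 (mod 7)` then `(2j+1)² + 2(2k+1)² ≡ 0 (mod 7)`, and since `-2` is not a
square mod 7 this forces `7 ∣ 2k+1`; hence the product has no terms in degrees `≡ 4 (mod 7)`. As
`f₁₄` is a series in `q⁷` with constant term 1, induction on `n` gives the same for `∑ a₃(n) qⁿ`.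

Both classical identities come from the finite Jacobi triple product
`(q;q)_{2N} ∏_{k=1}^{N} (1 + z qᵏ) ∏_{k=0}^{N-1} (z + qᵏ) = ∑_{|j|≤N} z^{N+j} q^{j(j+1)/2} c_{N,j}`,
proved by induction on `N`, whose cofactors satisfy `c_{N,j} ≡ 1 (mod q^{N-|j|+1})`. Gauss's
identity is the case `z = 1`; Jacobi's follows by dividing the case `z = -w` by `1 - w` and then
setting `w = 1`. Identities between infinite products are handled as congruences modulo `q^N`.
-/

open Finset

namespace CubicPartition

lemma smodEq_span_singleton_iff {R : Type*} [CommRing R] {x y a : R} :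
    x ≡ y [SMOD Ideal.span {a}] ↔ a ∣ x - y := by
  rw [SModEq.sub_mem, Ideal.mem_span_singleton]

lemma SModEq.map_span_singleton {R S : Type*} [CommRing R] [CommRing S] (φ : R →+* S)
    {x y a : R} (h : x ≡ y [SMOD Ideal.span {a}]) : φ x ≡ φ y [SMOD Ideal.span {φ a}] := by
  rw [smodEq_span_singleton_iff] at h ⊢
  simpa only [map_sub] using map_dvd φ h

lemma SModEq.of_dvd {R : Type*} [CommRing R] {x y a b : R} (hab : a ∣ b)
    (h : x ≡ y [SMOD Ideal.span {b}]) : x ≡ y [SMOD Ideal.span {a}] :=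
  h.mono (Ideal.span_singleton_le_span_singleton.2 hab)

lemma pow_dvd_pow_pow_of_le {M : Type*} [Monoid M] (x : M) {a m b : ℕ} (h : a ≤ m * b) :
    x ^ a ∣ (x ^ m) ^ b := by
  rw [← pow_mul]
  exact pow_dvd_pow x h

section QPochhammer

variable {R : Type*} [CommRing R] (q : R)

/-- The q-Pochhammer symbol `(q^{a+1}; q)_n`. -/
noncomputable def qPoch (a n : ℕ) : R := ∏ k ∈ range n, (1 - q ^ (a + k + 1))

@[simp] lemma qPoch_zero (a : ℕ) : qPoch q a 0 = 1 := prod_range_zero _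

lemma qPoch_succ (a n : ℕ) : qPoch q a (n + 1) = qPoch q a n * (1 - q ^ (a + n + 1)) :=
  prod_range_succ _ _

lemma qPoch_succ' (a n : ℕ) : qPoch q a (n + 1) = (1 - q ^ (a + 1)) * qPoch q (a + 1) n := by
  rw [qPoch, prod_range_succ', mul_comm, qPoch]
  simp only [add_zero, add_assoc, add_comm 1]

lemma qPoch_add (a m n : ℕ) : qPoch q a (m + n) = qPoch q a m * qPoch q (a + m) n := by
  simp only [qPoch, prod_range_add, add_assoc]

lemma pow_dvd_qPoch_sub_one (a n : ℕ) : q ^ (a + 1) ∣ qPoch q a n - 1 := by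
  induction n with
  | zero => simp
  | succ n ih =>
    have h : q ^ (a + 1) ∣ q ^ (a + n + 1) := pow_dvd_pow q (by omega)
    rw [qPoch_succ, show qPoch q a n * (1 - q ^ (a + n + 1)) - 1
      = (qPoch q a n - 1) * (1 - q ^ (a + n + 1)) - q ^ (a + n + 1) by ring]
    exact dvd_sub (dvd_mul_of_dvd_left ih _) h

lemma qPoch_smodEq_of_le {M L : ℕ} (h : M ≤ L) :
    qPoch q 0 L ≡ qPoch q 0 M [SMOD Ideal.span {q ^ (M + 1)}] := by
  obtain ⟨n, rfl⟩ := Nat.exists_eq_add_of_le h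
  rw [smodEq_span_singleton_iff, qPoch_add, zero_add, ← mul_sub_one]
  exact dvd_mul_of_dvd_right (pow_dvd_qPoch_sub_one q M n) _

lemma map_qPoch {S : Type*} [CommRing S] (φ : R →+* S) (a n : ℕ) :
    φ (qPoch q a n) = qPoch (φ q) a n := by
  simp [qPoch, map_prod]

lemma qPoch_mul_prod_one_add (a n : ℕ) :
    qPoch q a n * ∏ k ∈ range n, (1 + q ^ (a + k + 1)) = qPoch (q ^ 2) a n := by
  rw [qPoch, qPoch, ← prod_mul_distrib]
  refine prod_congr rfl fun k _ => ?_
  ring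

lemma qPoch_pow_char (p : ℕ) [Fact p.Prime] [CharP R p] (a n : ℕ) :
    qPoch q a n ^ p = qPoch (q ^ p) a n := by
  rw [qPoch, qPoch, ← prod_pow]
  refine prod_congr rfl fun k _ => ?_
  rw [sub_pow_char, one_pow, ← pow_mul, ← pow_mul, mul_comm]

end QPochhammer

def triangular (j : ℤ) : ℕ := (j * (j + 1) / 2).toNat

lemma two_mul_triangular (j : ℤ) : 2 * (triangular j : ℤ) = j * (j + 1) := by
  have hnonneg : 0 ≤ j * (j + 1) := by
    rcases le_or_gt 0 j with h | h
    · positivity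
    · nlinarith
  rw [triangular, Int.toNat_of_nonneg (Int.ediv_nonneg hnonneg (by norm_num))]
  exact Int.mul_ediv_cancel' (Int.even_mul_succ_self j).two_dvd

lemma triangular_add_one (j : ℤ) : (triangular (j + 1) : ℤ) = triangular j + j + 1 := by
  linarith [two_mul_triangular j, two_mul_triangular (j + 1)]

lemma triangular_neg_sub_one (j : ℤ) : triangular (-j - 1) = triangular j := by
  have : (triangular (-j - 1) : ℤ) = triangular j := by
    linarith [two_mul_triangular j, two_mul_triangular (-j - 1)]
  omega

lemma natAbs_le_triangular_add_one (j : ℤ) : j.natAbs ≤ triangular j + 1 := by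
  have := two_mul_triangular j
  have : (j.natAbs : ℤ) ≤ triangular j + 1 := by
    rcases le_or_gt 0 j with h | h
    · rw [Int.natAbs_of_nonneg h]; nlinarith
    · rw [Int.ofNat_natAbs_of_nonpos h.le]; nlinarith
  omega

lemma le_triangular (k : ℕ) : k ≤ triangular k := by
  have := two_mul_triangular k
  have : (k : ℤ) ≤ triangular k := by nlinarith [sq_nonneg ((k : ℤ) - 1)]
  omega

section TripleProduct

variable {R : Type*} [CommRing R] (q z : R)

/-- `(q;q)_{a+b}` times the Gaussian binomial coefficient `[a+b, a]_q`; accordingly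
`tripleCofactor_rec` is the q-Pascal rule applied twice. -/
noncomputable def tripleCofactor (a b : ℕ) : R := qPoch q a b * qPoch q b a

lemma tripleCofactor_comm (a b : ℕ) : tripleCofactor q a b = tripleCofactor q b a :=
  mul_comm _ _

lemma tripleCofactor_rec (A B n : ℕ) (h : A + B = n + 2) :
    tripleCofactor q A B = (1 - q ^ (n + 1)) * (1 - q ^ (n + 2)) *
      ((1 + q ^ (n + 1)) * (if 1 ≤ A ∧ 1 ≤ B then tripleCofactor q (A - 1) (B - 1) else 0)
        + q ^ A * (if 2 ≤ B then tripleCofactor q A (B - 2) else 0)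
        + q ^ B * (if 2 ≤ A then tripleCofactor q (A - 2) B else 0)) := by
  wlog hAB : A ≤ B generalizing A B
  · rw [tripleCofactor_comm, this B A (by omega) (by omega)]
    simp only [and_comm, tripleCofactor_comm q (B - 1), tripleCofactor_comm q (B - 2),
      tripleCofactor_comm q B]
    ring
  obtain _ | _ | a := A
  · obtain rfl : B = n + 2 := by omega
    rw [if_neg (by omega), if_pos (by omega), if_neg (by omega), Nat.add_sub_cancel]
    simp only [tripleCofactor, qPoch_succ, qPoch_zero]
    ring
  · obtain _ | _ | b := B
    · omega
    · obtain rfl : n = 0 := by omega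
      rw [if_pos (by omega), if_neg (by omega), if_neg (by omega)]
      simp only [tripleCofactor, qPoch_succ, qPoch_zero, Nat.sub_self]
      ring
    · obtain rfl : n = b + 1 := by omega
      rw [if_pos (by omega), if_pos (by omega), if_neg (by omega), Nat.sub_self,
        show b + 1 + 1 - 1 = b + 1 by omega, show b + 1 + 1 - 2 = b by omega]
      simp only [tripleCofactor]
      rw [qPoch_succ q 1 (b + 1), qPoch_succ q 1 b, qPoch_succ' q 0 b]
      simp only [qPoch_succ, qPoch_zero]
      ring
  · obtain _ | _ | b := B
    · omega
    · omega
    · obtain rfl : n = a + b + 2 := by omega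
      rw [if_pos (by omega), if_pos (by omega), if_pos (by omega),
        show a + 1 + 1 - 1 = a + 1 by omega, show b + 1 + 1 - 1 = b + 1 by omega,
        show a + 1 + 1 - 2 = a by omega, show b + 1 + 1 - 2 = b by omega]
      simp only [tripleCofactor]
      rw [qPoch_succ q (a + 1 + 1) (b + 1), qPoch_succ q (a + 1 + 1) b,
        qPoch_succ q (b + 1 + 1) (a + 1), qPoch_succ q (b + 1 + 1) a, qPoch_succ' q (a + 1) b,
        qPoch_succ' q (b + 1) a, qPoch_succ' q b (a + 1), qPoch_succ' q (b + 1) a,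
        qPoch_succ' q a (b + 1), qPoch_succ' q (a + 1) b]
      ring

noncomputable def tripleTerm (N : ℕ) (j : ℤ) : R :=
  if j.natAbs ≤ N then
    z ^ (N + j).toNat * q ^ triangular j * tripleCofactor q (N + j).toNat (N - j).toNat
  else 0

lemma tripleTerm_of_lt (N : ℕ) (j : ℤ) (h : N < j.natAbs) : tripleTerm q z N j = 0 :=
  if_neg (by omega)

lemma tripleTerm_eq (N : ℕ) (j : ℤ) {a b : ℕ} (ha : (a : ℤ) = N + j) (hb : (b : ℤ) = N - j) :
    tripleTerm q z N j = z ^ a * q ^ triangular j * tripleCofactor q a b := by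
  rw [tripleTerm, if_pos (by omega), show ((N : ℤ) + j).toNat = a by omega,
    show ((N : ℤ) - j).toNat = b by omega]

lemma tripleTerm_succ (N : ℕ) (j : ℤ) (hj : j.natAbs ≤ N + 1) :
    tripleTerm q z (N + 1) j = (1 - q ^ (2 * N + 1)) * (1 - q ^ (2 * N + 2)) *
      (z * (1 + q ^ (2 * N + 1)) * tripleTerm q z N j + q ^ N * tripleTerm q z N (j + 1)
        + z ^ 2 * q ^ (N + 1) * tripleTerm q z N (j - 1)) := by
  obtain ⟨A, hA⟩ : ∃ A : ℕ, (A : ℤ) = N + 1 + j := ⟨(N + 1 + j).toNat, by omega⟩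
  obtain ⟨B, hB⟩ : ∃ B : ℕ, (B : ℤ) = N + 1 - j := ⟨(N + 1 - j).toNat, by omega⟩
  set T := triangular j
  have e₁ : z * tripleTerm q z N j = z ^ A * q ^ T *
      (if 1 ≤ A ∧ 1 ≤ B then tripleCofactor q (A - 1) (B - 1) else 0) := by
    by_cases h : 1 ≤ A ∧ 1 ≤ B
    · obtain ⟨a, rfl⟩ : ∃ a, A = a + 1 := ⟨A - 1, by omega⟩
      rw [if_pos h, tripleTerm_eq q z N j (a := a) (b := B - 1) (by omega) (by omega),
        Nat.add_sub_cancel]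
      ring
    · rw [if_neg h, tripleTerm_of_lt q z N j (by omega), mul_zero, mul_zero]
  have e₂ : q ^ N * tripleTerm q z N (j + 1) = z ^ A * q ^ T *
      (q ^ A * if 2 ≤ B then tripleCofactor q A (B - 2) else 0) := by
    by_cases h : 2 ≤ B
    · have hT : N + triangular (j + 1) = A + T := by have := triangular_add_one j; omega
      rw [if_pos h, tripleTerm_eq q z N (j + 1) (a := A) (b := B - 2) (by omega) (by omega)]
      linear_combination (z ^ A * tripleCofactor q A (B - 2)) * congrArg (q ^ ·) hT
    · rw [if_neg h, tripleTerm_of_lt q z N (j + 1) (by omega), mul_zero, mul_zero, mul_zero]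
  have e₃ : z ^ 2 * q ^ (N + 1) * tripleTerm q z N (j - 1) = z ^ A * q ^ T *
      (q ^ B * if 2 ≤ A then tripleCofactor q (A - 2) B else 0) := by
    by_cases h : 2 ≤ A
    · obtain ⟨a, rfl⟩ : ∃ a, A = a + 2 := ⟨A - 2, by omega⟩
      have hT : N + 1 + triangular (j - 1) = B + T := by
        have := triangular_add_one (j - 1); rw [sub_add_cancel] at this; omega
      rw [if_pos h, tripleTerm_eq q z N (j - 1) (a := a) (b := B) (by omega) (by omega),
        Nat.add_sub_cancel]
      linear_combination (z ^ (a + 2) * tripleCofactor q a B) * congrArg (q ^ ·) hT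
    · rw [if_neg h, tripleTerm_of_lt q z N (j - 1) (by omega), mul_zero, mul_zero, mul_zero]
  rw [tripleTerm_eq q z (N + 1) j (by push_cast; omega) (by push_cast; omega),
    tripleCofactor_rec q A B (2 * N) (by omega)]
  linear_combination (-(1 - q ^ (2 * N + 1)) * (1 - q ^ (2 * N + 2))) *
    ((1 + q ^ (2 * N + 1)) * e₁ + e₂ + e₃)

lemma sum_Icc_tripleTerm (N : ℕ) {lo hi : ℤ} (hlo : lo ≤ -N) (hhi : N ≤ hi) :
    ∑ j ∈ Icc lo hi, tripleTerm q z N j = ∑ j ∈ Icc (-N : ℤ) N, tripleTerm q z N j := by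
  refine (sum_subset (fun j hj => ?_) fun j hj hj' => tripleTerm_of_lt q z N j ?_).symm <;>
    simp only [mem_Icc] at * <;> omega

lemma sum_Icc_add_right {M : Type*} [AddCommMonoid M] (g : ℤ → M) (a b c : ℤ) :
    ∑ j ∈ Icc a b, g (j + c) = ∑ j ∈ Icc (a + c) (b + c), g j := by
  rw [← map_add_right_Icc, sum_map]
  rfl

theorem finite_triple_product (N : ℕ) :
    qPoch q 0 (2 * N) * (∏ k ∈ range N, (1 + z * q ^ (k + 1))) * ∏ k ∈ range N, (z + q ^ k)
      = ∑ j ∈ Icc (-N : ℤ) N, tripleTerm q z N j := by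
  induction N with
  | zero => simp [tripleTerm, tripleCofactor, triangular]
  | succ N ih =>
    have hshift (c : ℤ) (hc : c.natAbs ≤ 1) : ∑ j ∈ Icc (-(N + 1 : ℕ) : ℤ) (N + 1 : ℕ),
        tripleTerm q z N (j + c) = ∑ j ∈ Icc (-N : ℤ) N, tripleTerm q z N j := by
      rw [sum_Icc_add_right]
      exact sum_Icc_tripleTerm q z N (by push_cast; omega) (by push_cast; omega)
    have hsucc : ∑ j ∈ Icc (-(N + 1 : ℕ) : ℤ) (N + 1 : ℕ), tripleTerm q z (N + 1) j
        = (1 - q ^ (2 * N + 1)) * (1 - q ^ (2 * N + 2)) *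
          (z * (1 + q ^ (2 * N + 1)) + q ^ N + z ^ 2 * q ^ (N + 1))
          * ∑ j ∈ Icc (-N : ℤ) N, tripleTerm q z N j := by
      rw [sum_congr rfl fun j hj => tripleTerm_succ q z N j (by simp only [mem_Icc] at hj; omega)]
      simp only [← mul_sum, sum_add_distrib]
      have h₀ := hshift 0 (by simp)
      have h₁ := hshift (-1) (by simp)
      simp only [add_zero, ← sub_eq_add_neg] at h₀ h₁
      rw [h₀, h₁, hshift 1 (by simp)]
      ring
    rw [hsucc, ← ih, show 2 * (N + 1) = 2 * N + 1 + 1 by ring, qPoch_succ, qPoch_succ,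
      prod_range_succ, prod_range_succ]
    ring

lemma tripleTerm_smodEq (N : ℕ) (j : ℤ) (hj : j.natAbs ≤ N) :
    tripleTerm q z N j ≡ z ^ (N + j).toNat * q ^ triangular j [SMOD Ideal.span {q ^ N}] := by
  set e := N - j.natAbs + 1
  have hP (a b : ℕ) (ha : N - j.natAbs ≤ a) : q ^ e ∣ qPoch q a b - 1 :=
    (pow_dvd_pow q (by omega)).trans (pow_dvd_qPoch_sub_one q a b)
  have hcof : q ^ e ∣ tripleCofactor q (N + j).toNat (N - j).toNat - 1 := by
    rw [tripleCofactor, show ∀ x y : R, x * y - 1 = (x - 1) * y + (y - 1) by intros; ring]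
    exact dvd_add (dvd_mul_of_dvd_left (hP _ _ (by omega)) _) (hP _ _ (by omega))
  have hN : q ^ N ∣ q ^ (triangular j + e) :=
    pow_dvd_pow q (by have := natAbs_le_triangular_add_one j; omega)
  rw [pow_add] at hN
  rw [smodEq_span_singleton_iff, tripleTerm, if_pos hj, ← mul_sub_one]
  exact hN.trans (mul_dvd_mul (dvd_mul_left _ _) hcof)

lemma sum_Icc_neg_natCast {M : Type*} [AddCommMonoid M] (g : ℤ → M) (N : ℕ) :
    ∑ j ∈ Icc (-N : ℤ) N, g j = g N + ∑ k ∈ range N, (g k + g (-k - 1)) := by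
  induction N with
  | zero => simp
  | succ N ih =>
    have hIcc : Icc (-(N + 1 : ℕ) : ℤ) (N + 1 : ℕ)
        = insert ((N : ℤ) + 1) (insert (-(N : ℤ) - 1) (Icc (-N : ℤ) N)) := by
      ext j; simp only [mem_Icc, mem_insert]; omega
    rw [hIcc, sum_insert (by simp only [mem_insert, mem_Icc]; omega), sum_insert (by simp), ih,
      sum_range_succ]
    push_cast
    abel

theorem finite_triple_product_smodEq (N : ℕ) :
    qPoch q 0 (2 * N) * (∏ k ∈ range N, (1 + z * q ^ (k + 1))) * ∏ k ∈ range N, (z + q ^ k)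
      ≡ ∑ k ∈ range N, (z ^ (N + k) + z ^ (N - 1 - k)) * q ^ triangular k
        [SMOD Ideal.span {q ^ N}] := by
  rw [finite_triple_product]
  refine (SModEq.sum fun j hj => tripleTerm_smodEq q z N j ?_).trans ?_
  · simp only [mem_Icc] at hj; omega
  have hpair : ∑ k ∈ range N, (z ^ ((N : ℤ) + k).toNat * q ^ triangular k
      + z ^ ((N : ℤ) + (-k - 1)).toNat * q ^ triangular (-k - 1))
      = ∑ k ∈ range N, (z ^ (N + k) + z ^ (N - 1 - k)) * q ^ triangular k := by
    refine sum_congr rfl fun k hk => ?_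
    rw [mem_range] at hk
    rw [triangular_neg_sub_one, show ((N : ℤ) + k).toNat = N + k by omega,
      show ((N : ℤ) + (-k - 1)).toNat = N - 1 - k by omega, add_mul]
  rw [sum_Icc_neg_natCast, hpair, smodEq_span_singleton_iff, add_sub_cancel_right]
  exact dvd_mul_of_dvd_right (pow_dvd_pow q (le_triangular N)) _

end TripleProduct

section PowerSeries

open PowerSeries

variable {R : Type*} [CommRing R]

lemma smodEq_X_pow_iff {F G : R⟦X⟧} {n : ℕ} :
    F ≡ G [SMOD Ideal.span {X ^ n}] ↔ ∀ i < n, coeff i F = coeff i G := by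
  simp only [smodEq_span_singleton_iff, X_pow_dvd_iff, map_sub, sub_eq_zero]

lemma SModEq.of_C_mul [NoZeroDivisors R] {c : R} (hc : c ≠ 0) {F G : R⟦X⟧} {n : ℕ}
    (h : C c * F ≡ C c * G [SMOD Ideal.span {X ^ n}]) : F ≡ G [SMOD Ideal.span {X ^ n}] := by
  rw [smodEq_X_pow_iff] at h ⊢
  intro i hi
  simpa only [coeff_C_mul, mul_right_inj' hc] using h i hi

lemma prod_one_sub_X_pow_eq_qPoch (m L : ℕ) :
    ∏ k ∈ range L, (1 - (X : R⟦X⟧) ^ (m * (k + 1))) = qPoch (X ^ m) 0 L := by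
  simp only [qPoch, zero_add, pow_mul]

lemma f_smodEq_qPoch {m : ℕ} (hm : 0 < m) (L : ℕ) :
    f m ≡ qPoch (X ^ m) 0 L [SMOD Ideal.span {((X : ℤ⟦X⟧) ^ m) ^ (L + 1)}] := by
  have hagree {M L' i : ℕ} (h : M ≤ L') (hi : i < m * (M + 1)) :
      coeff i (qPoch ((X : ℤ⟦X⟧) ^ m) 0 L') = coeff i (qPoch (X ^ m) 0 M) := by
    have := qPoch_smodEq_of_le ((X : ℤ⟦X⟧) ^ m) h
    rw [← pow_mul, smodEq_X_pow_iff] at this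
    exact this i hi
  rw [← pow_mul, smodEq_X_pow_iff]
  intro i hi
  rw [f, coeff_mk, prod_one_sub_X_pow_eq_qPoch]
  rcases le_total L (i + 1) with h | h
  · exact hagree h hi
  · exact (hagree h (by nlinarith)).symm

lemma gauss_qPoch_smodEq (M : ℕ) :
    qPoch (X : ℤ⟦X⟧) 0 (2 * (M + 1)) * (∏ k ∈ range (M + 1), (1 + X ^ (k + 1)))
      * ∏ k ∈ range M, (1 + X ^ (k + 1))
      ≡ ∑ k ∈ range (M + 1), X ^ triangular k [SMOD Ideal.span {X ^ (M + 1)}] := by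
  refine SModEq.of_C_mul (c := 2) two_ne_zero ?_
  have h := finite_triple_product_smodEq (X : ℤ⟦X⟧) 1 (M + 1)
  rw [prod_range_succ' (fun k => 1 + X ^ k)] at h
  have hL : C 2 * (qPoch (X : ℤ⟦X⟧) 0 (2 * (M + 1)) * (∏ k ∈ range (M + 1), (1 + X ^ (k + 1)))
      * ∏ k ∈ range M, (1 + X ^ (k + 1))) = qPoch X 0 (2 * (M + 1))
      * (∏ k ∈ range (M + 1), (1 + 1 * X ^ (k + 1)))
      * ((∏ k ∈ range M, (1 + X ^ (k + 1))) * (1 + X ^ 0)) := by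
    simp only [map_ofNat, one_mul, pow_zero]
    ring
  have hR : C 2 * ∑ k ∈ range (M + 1), X ^ triangular k = ∑ k ∈ range (M + 1),
      ((1 : ℤ⟦X⟧) ^ (M + 1 + k) + 1 ^ (M + 1 - 1 - k)) * X ^ triangular k := by
    simp only [map_ofNat, mul_sum, one_pow]
    exact sum_congr rfl fun k _ => by ring
  rwa [hL, hR]

theorem gauss_smodEq (N : ℕ) :
    f 1 * ∑ k ∈ range N, (X : ℤ⟦X⟧) ^ triangular k
      ≡ f 2 ^ 2 [SMOD Ideal.span {(X : ℤ⟦X⟧) ^ N}] := by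
  obtain _ | M := N
  · simp only [pow_zero, Ideal.span_singleton_one, SModEq.top]
  set I := Ideal.span {(X : ℤ⟦X⟧) ^ (M + 1)}
  set P : ℕ → ℤ⟦X⟧ := fun n => ∏ k ∈ range n, (1 + X ^ (k + 1))
  have hP (n : ℕ) : qPoch X 0 n * P n = qPoch (X ^ 2) 0 n := by
    simpa only [zero_add] using qPoch_mul_prod_one_add X 0 n
  have hf1 : f 1 ≡ qPoch X 0 (M + 1) [SMOD I] := by
    simpa only [pow_one] using
      SModEq.of_dvd (pow_dvd_pow_pow_of_le X (by omega)) (f_smodEq_qPoch one_pos (M + 1))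
  have hf2 : f 2 ≡ qPoch (X ^ 2) 0 (M + 1) [SMOD I] :=
    SModEq.of_dvd (pow_dvd_pow_pow_of_le X (by omega)) (f_smodEq_qPoch two_pos (M + 1))
  have hf2' : f 2 ≡ qPoch (X ^ 2) 0 M [SMOD I] :=
    SModEq.of_dvd (pow_dvd_pow_pow_of_le X (by omega)) (f_smodEq_qPoch two_pos M)
  have htail : qPoch (X : ℤ⟦X⟧) M (M + 2) ≡ 1 [SMOD I] :=
    smodEq_span_singleton_iff.2 (pow_dvd_qPoch_sub_one X M _)
  calc f 1 * ∑ k ∈ range (M + 1), X ^ triangular k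
      ≡ qPoch X 0 (M + 1) * (qPoch X 0 (2 * (M + 1)) * P (M + 1) * P M) [SMOD I] :=
        SModEq.mul hf1 (gauss_qPoch_smodEq M).symm
    _ = qPoch (X ^ 2) 0 (M + 1) * qPoch (X ^ 2) 0 M * qPoch X M (M + 2) := by
        rw [← hP, ← hP, show 2 * (M + 1) = M + (M + 2) by ring, qPoch_add X 0 M (M + 2), zero_add]
        ring
    _ ≡ f 2 * f 2 * 1 [SMOD I] := SModEq.mul (SModEq.mul hf2.symm hf2'.symm) htail
    _ = f 2 ^ 2 := by ring

lemma neg_one_pow_mul_neg_one_pow_sub {k n : ℕ} (h : k ≤ n) :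
    (-1 : R) ^ n * (-1) ^ (n - k) = (-1) ^ k := by
  obtain ⟨d, rfl⟩ := Nat.exists_eq_add_of_le h
  rw [Nat.add_sub_cancel_left, pow_add, mul_assoc, ← pow_add, ← two_mul, pow_mul, neg_one_sq,
    one_pow, mul_one]

/-- `finite_triple_product_smodEq` at `z = -w`, divided by the factor `1 - w` that both sides
acquire: the left one from `z + q⁰`, the right one from pairing the terms of `j` and `-j - 1`. -/
lemma finite_triple_product_neg_smodEq (m M : ℕ) :
    qPoch ((X : (Polynomial ℤ)⟦X⟧) ^ m) 0 (2 * (M + 1))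
      * (∏ k ∈ range (M + 1), (1 - C Polynomial.X * (X ^ m) ^ (k + 1)))
      * ∏ k ∈ range M, ((X ^ m) ^ (k + 1) - C Polynomial.X)
      ≡ ∑ k ∈ range (M + 1), (-C Polynomial.X) ^ (M - k)
          * (∑ i ∈ range (2 * k + 1), C Polynomial.X ^ i) * (X ^ m) ^ triangular k
        [SMOD Ideal.span {X ^ (m * (M + 1))}] := by
  set q : (Polynomial ℤ)⟦X⟧ := X ^ m
  set w : (Polynomial ℤ)⟦X⟧ := C Polynomial.X
  have hw : C (1 - Polynomial.X) = 1 - w := by rw [map_sub, map_one]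
  have hL : qPoch q 0 (2 * (M + 1)) * (∏ k ∈ range (M + 1), (1 + -w * q ^ (k + 1)))
      * ∏ k ∈ range (M + 1), (-w + q ^ k) = C (1 - Polynomial.X) * (qPoch q 0 (2 * (M + 1))
        * (∏ k ∈ range (M + 1), (1 - w * q ^ (k + 1))) * ∏ k ∈ range M, (q ^ (k + 1) - w)) := by
    rw [prod_range_succ' (fun k => -w + q ^ k), hw, pow_zero]
    simp only [neg_mul, ← sub_eq_add_neg, neg_add_eq_sub]
    ring
  have hR : ∑ k ∈ range (M + 1), ((-w) ^ (M + 1 + k) + (-w) ^ (M + 1 - 1 - k)) * q ^ triangular k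
      = C (1 - Polynomial.X) * ∑ k ∈ range (M + 1),
        (-w) ^ (M - k) * (∑ i ∈ range (2 * k + 1), w ^ i) * q ^ triangular k := by
    rw [mul_sum, hw]
    refine sum_congr rfl fun k hk => ?_
    rw [mem_range] at hk
    have hodd : (-w) ^ (M + 1 + k) = (-w) ^ (M - k) * -w ^ (2 * k + 1) := by
      rw [← Odd.neg_pow ⟨k, rfl⟩, ← pow_add]
      congr 1
      omega
    rw [hodd, show M + 1 - 1 - k = M - k by omega]
    linear_combination (-((-w) ^ (M - k) * q ^ triangular k)) * mul_neg_geom_sum w (2 * k + 1)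
  have h := finite_triple_product_smodEq q (-w) (M + 1)
  rw [hL, hR, ← pow_mul] at h
  exact SModEq.of_C_mul (fun h => by simpa using congrArg (Polynomial.eval 0) h) h

lemma jacobi_qPoch_smodEq {m : ℕ} (M : ℕ) :
    qPoch ((X : ℤ⟦X⟧) ^ m) 0 (2 * (M + 1)) * qPoch (X ^ m) 0 (M + 1) * qPoch (X ^ m) 0 M
      ≡ ∑ k ∈ range (M + 1), ((-1) ^ k * (2 * k + 1) : ℤ⟦X⟧) * (X ^ m) ^ triangular k
        [SMOD Ideal.span {((X : ℤ⟦X⟧) ^ m) ^ (M + 1)}] := by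
  set ev : (Polynomial ℤ)⟦X⟧ →+* ℤ⟦X⟧ := map (Polynomial.evalRingHom 1)
  have hw : ev (C Polynomial.X) = 1 := by simp [ev]
  have hX : ev X = X := map_X _
  have h₁ : ∏ k ∈ range (M + 1), (1 - 1 * ((X : ℤ⟦X⟧) ^ m) ^ (k + 1))
      = qPoch (X ^ m) 0 (M + 1) :=
    prod_congr rfl fun k _ => by rw [zero_add, one_mul]
  have h₂ : ∏ k ∈ range M, (((X : ℤ⟦X⟧) ^ m) ^ (k + 1) - 1) = (-1) ^ M * qPoch (X ^ m) 0 M := by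
    rw [qPoch, show (-1 : ℤ⟦X⟧) ^ M = (-1) ^ #(range M) by rw [card_range], ← prod_neg]
    exact prod_congr rfl fun k _ => by rw [zero_add, neg_sub]
  have h := SModEq.map_span_singleton ev (finite_triple_product_neg_smodEq m M)
  simp only [map_mul, map_prod, map_sub, map_one, map_pow, map_sum, map_neg, map_qPoch, hX,
    hw, h₁, h₂, one_pow, sum_const, card_range, nsmul_eq_mul, mul_one] at h
  rw [← pow_mul]
  calc _ = (-1) ^ M * ((-1) ^ M * (qPoch ((X : ℤ⟦X⟧) ^ m) 0 (2 * (M + 1))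
          * qPoch (X ^ m) 0 (M + 1) * qPoch (X ^ m) 0 M)) := by
        rw [← mul_assoc, ← pow_add, ← two_mul, pow_mul, neg_one_sq, one_pow, one_mul]
    _ ≡ (-1) ^ M * ∑ k ∈ range (M + 1), ((-1) ^ (M - k) * (2 * k + 1) : ℤ⟦X⟧)
          * (X ^ m) ^ triangular k [SMOD Ideal.span {X ^ (m * (M + 1))}] := by
        rw [mul_left_comm] at h
        push_cast at h
        exact SModEq.mul (SModEq.refl _) h
    _ = _ := by
        rw [mul_sum]
        refine sum_congr rfl fun k hk => ?_
        rw [← mul_assoc, ← mul_assoc,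
          neg_one_pow_mul_neg_one_pow_sub (by rw [mem_range] at hk; omega)]

theorem jacobi_smodEq {m : ℕ} (hm : 0 < m) (N : ℕ) :
    f m ^ 3 ≡ ∑ k ∈ range N, ((-1) ^ k * (2 * k + 1) : ℤ⟦X⟧) * (X ^ m) ^ triangular k
      [SMOD Ideal.span {((X : ℤ⟦X⟧) ^ m) ^ N}] := by
  obtain _ | M := N
  · simp only [pow_zero, Ideal.span_singleton_one, SModEq.top]
  have hf {L : ℕ} (hL : M ≤ L) : f m ≡ qPoch (X ^ m) 0 L [SMOD Ideal.span {(X ^ m) ^ (M + 1)}] :=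
    SModEq.of_dvd (pow_dvd_pow _ (by omega)) (f_smodEq_qPoch hm L)
  rw [pow_three']
  exact (SModEq.mul (SModEq.mul (hf (by omega)) (hf (by omega))) (hf le_rfl)).trans
    (jacobi_qPoch_smodEq M)

lemma coeff_zero_f {m : ℕ} (hm : 0 < m) : coeff 0 (f m) = 1 := by
  have := f_smodEq_qPoch hm 0
  rw [← pow_mul, smodEq_X_pow_iff] at this
  simpa using this 0 (by omega)

lemma coeff_f_eq_zero_of_not_dvd {d : ℕ} (hd : d ≠ 0) (m : ℕ) {n : ℕ} (hn : ¬ d ∣ n) :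
    coeff n (f (d * m)) = 0 := by
  have hexp : ∏ k ∈ range (n + 1), (1 - (X : ℤ⟦X⟧) ^ (d * m * (k + 1)))
      = expand d hd (∏ k ∈ range (n + 1), (1 - X ^ (m * (k + 1)))) := by
    simp only [map_prod, map_sub, map_one, map_pow, expand_X, ← pow_mul, mul_assoc]
  rw [f, coeff_mk, hexp]
  exact coeff_expand_of_not_dvd d hd _ hn

lemma map_f_pow_char (K : Type*) [CommRing K] (p : ℕ) [Fact p.Prime] [CharP K p] {m : ℕ}
    (hm : 0 < m) : map (Int.castRingHom K) (f m) ^ p = map (Int.castRingHom K) (f (p * m)) := by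
  have : CharP K⟦X⟧ p := charP_of_injective_algebraMap C_injective p
  set φ : ℤ⟦X⟧ →+* K⟦X⟧ := map (Int.castRingHom K)
  have hφ {m' L : ℕ} (hm' : 0 < m') :
      φ (f m') ≡ qPoch (X ^ m') 0 L [SMOD Ideal.span {((X : K⟦X⟧) ^ m') ^ (L + 1)}] := by
    simpa only [map_qPoch, map_pow, φ, map_X] using
      SModEq.map_span_singleton φ (f_smodEq_qPoch hm' L)
  have hp := (Fact.out : p.Prime).one_lt
  ext n
  have h₁ : φ (f m) ^ p ≡ qPoch (X ^ (p * m)) 0 n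
      [SMOD Ideal.span {((X : K⟦X⟧) ^ m) ^ (n + 1)}] := by
    rw [pow_mul', ← qPoch_pow_char]
    exact SModEq.pow p (hφ hm)
  have h₂ : φ (f (p * m)) ≡ qPoch (X ^ (p * m)) 0 n
      [SMOD Ideal.span {((X : K⟦X⟧) ^ m) ^ (n + 1)}] := by
    refine SModEq.of_dvd ?_ (hφ (by positivity))
    rw [← pow_mul, ← pow_mul]
    exact pow_dvd_pow X (by rw [mul_assoc]; exact Nat.le_mul_of_pos_left _ (by omega))
  rw [← pow_mul, smodEq_X_pow_iff] at h₁ h₂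
  rw [h₁ n (by nlinarith), h₂ n (by nlinarith)]

end PowerSeries

section ModSeven

open PowerSeries

lemma seven_dvd_of_triangular_add_two_mul {k l n : ℕ}
    (h : triangular k + 2 * triangular l = 7 * n + 4) : (7 : ℤ) ∣ 2 * l + 1 := by
  have hsq : (2 * k + 1 : ℤ) ^ 2 + 2 * (2 * l + 1) ^ 2 = 7 * (8 * n + 5) := by
    have h' : (triangular k : ℤ) + 2 * triangular l = 7 * n + 4 := by exact_mod_cast h
    linear_combination (-4) * two_mul_triangular k - 8 * two_mul_triangular l + 8 * h'
  have hmod := congrArg (Int.cast : ℤ → ZMod 7) hsq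
  push_cast at hmod
  rw [show (7 : ZMod 7) = 0 from rfl, zero_mul] at hmod
  have hl := (by decide : ∀ x y : ZMod 7, x ^ 2 + 2 * y ^ 2 = 0 → y = 0) _ _ hmod
  exact (ZMod.intCast_zmod_eq_zero_iff_dvd _ 7).1 (by push_cast; exact hl)

lemma coeff_mul_triangular_sums_eq_zero (N n : ℕ) :
    coeff (7 * n + 4) ((∑ k ∈ range N, (X : (ZMod 7)⟦X⟧) ^ triangular k) *
      ∑ l ∈ range N, ((-1) ^ l * (2 * l + 1) : (ZMod 7)⟦X⟧) * (X ^ 2) ^ triangular l) = 0 := by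
  rw [sum_mul_sum, map_sum]
  refine sum_eq_zero fun k _ => ?_
  rw [map_sum]
  refine sum_eq_zero fun l _ => ?_
  rw [show (X : (ZMod 7)⟦X⟧) ^ triangular k
      * (((-1) ^ l * (2 * l + 1) : (ZMod 7)⟦X⟧) * (X ^ 2) ^ triangular l)
      = C ((-1) ^ l * (2 * l + 1) : ZMod 7) * X ^ (triangular k + 2 * triangular l) by
        simp only [map_mul, map_pow, map_neg, map_one, map_add, map_ofNat, map_natCast]; ring,
    coeff_C_mul_X_pow]
  split_ifs with h
  · have h7 :=
      (ZMod.intCast_zmod_eq_zero_iff_dvd _ 7).2 (seven_dvd_of_triangular_add_two_mul h.symm)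
    push_cast at h7
    rw [h7, mul_zero]
  · rfl

lemma coeff_eq_zero_of_coeff_mul_eq_zero {R : Type*} [CommRing R] {d r : ℕ} (hr : r < d)
    {F G : R⟦X⟧} (hG₀ : coeff 0 G = 1) (hG : ∀ i, ¬ d ∣ i → coeff i G = 0)
    (hFG : ∀ n, coeff (d * n + r) (F * G) = 0) (n : ℕ) : coeff (d * n + r) F = 0 := by
  induction n using Nat.strong_induction_on with
  | _ n ih =>
  have h := hFG n
  rw [coeff_mul, sum_eq_single (d * n + r, 0), hG₀, mul_one] at h
  · exact h
  · rintro ⟨i, l⟩ hil hne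
    rw [HasAntidiagonal.mem_antidiagonal] at hil
    by_cases hl : d ∣ l
    · obtain ⟨s, rfl⟩ := hl
      have hs : s ≠ 0 := by
        rintro rfl
        simp only [mul_zero, add_zero] at hil
        exact hne (by rw [hil, mul_zero])
      have hsn : s < n + 1 :=
        Nat.lt_of_mul_lt_mul_left (a := d) (by rw [mul_add, mul_one]; omega)
      have hi : i = d * (n - s) + r := by
        rw [Nat.mul_sub]
        have := Nat.mul_le_mul_left d (Nat.lt_succ_iff.1 hsn)
        omega
      rw [hi, ih _ (by omega), zero_mul]
    · rw [hG l hl, mul_zero]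
  · simp

lemma coeff_map_mul_f_eq_zero (a : ℕ → ℤ) (ha : mk a * (f 1 * f 2 ^ 2) = 1) (n : ℕ) :
    coeff (7 * n + 4) (map (Int.castRingHom (ZMod 7)) (mk a * f (7 * 2))) = 0 := by
  set φ : ℤ⟦X⟧ →+* (ZMod 7)⟦X⟧ := map (Int.castRingHom (ZMod 7))
  set N := 7 * n + 5
  set ψ : (ZMod 7)⟦X⟧ := ∑ k ∈ range N, X ^ triangular k
  set J : (ZMod 7)⟦X⟧ :=
    ∑ l ∈ range N, ((-1) ^ l * (2 * l + 1) : (ZMod 7)⟦X⟧) * (X ^ 2) ^ triangular l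
  have hA : φ (mk a) * (φ (f 1) * φ (f 2) ^ 2) = 1 := by simpa using congrArg φ ha
  have hG : φ (f 1) * ψ ≡ φ (f 2) ^ 2 [SMOD Ideal.span {X ^ N}] := by
    have hψ : φ (∑ k ∈ range N, X ^ triangular k) = ψ := by simp [φ, ψ]
    have h := SModEq.map_span_singleton φ (gauss_smodEq N)
    rwa [map_mul, map_pow, hψ, map_pow, map_X] at h
  have hJ : φ (f 2) ^ 3 ≡ J [SMOD Ideal.span {X ^ N}] := by
    have hJ' : φ (∑ l ∈ range N, ((-1) ^ l * (2 * l + 1) : ℤ⟦X⟧) * (X ^ 2) ^ triangular l)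
        = J := by
      simp [φ, J, map_ofNat]
    have h := SModEq.map_span_singleton φ
      (SModEq.of_dvd (a := X ^ N) (pow_dvd_pow_pow_of_le X (by omega)) (jacobi_smodEq two_pos N))
    rwa [map_pow, hJ', map_pow, map_X] at h
  have key : φ (mk a) * φ (f 2) ^ 7 ≡ ψ * J [SMOD Ideal.span {X ^ N}] := by
    have h := SModEq.mul (SModEq.mul (SModEq.refl (φ (mk a) * φ (f 2) ^ 2)) hG.symm) hJ
    rwa [show φ (mk a) * φ (f 2) ^ 2 * φ (f 2) ^ 2 * φ (f 2) ^ 3 = φ (mk a) * φ (f 2) ^ 7 by ring,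
      show φ (mk a) * φ (f 2) ^ 2 * (φ (f 1) * ψ) * J = ψ * J by
        linear_combination (ψ * J) * hA] at h
  have : Fact (Nat.Prime 7) := ⟨by norm_num⟩
  rw [map_mul, ← map_f_pow_char (ZMod 7) 7 two_pos, smodEq_X_pow_iff.1 key _ (by omega)]
  exact coeff_mul_triangular_sums_eq_zero N n

end ModSeven

end CubicPartition

/-- If `a : ℕ → ℤ` has generating function `∑ a(n) q^n = 1/(f 1 * (f 2)^2)`
(i.e. `a = a_3`, counting partitions with even parts in 3 colors), then
`a_3(7n+4) ≡ 0 (mod 7)` for all `n ≥ 0`. -/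
theorem statement0 (a : ℕ → ℤ)
    (ha : PowerSeries.mk a * (f 1 * (f 2) ^ 2) = 1) :
    ∀ n : ℕ, (7 : ℤ) ∣ a (7 * n + 4) := by
  open PowerSeries CubicPartition in
  intro n
  set φ : ℤ⟦X⟧ →+* (ZMod 7)⟦X⟧ := map (Int.castRingHom (ZMod 7))
  have h := coeff_eq_zero_of_coeff_mul_eq_zero (d := 7) (r := 4) (by norm_num)
    (G := φ (f (7 * 2))) (by rw [coeff_map, coeff_zero_f (by norm_num), map_one])
    (fun i hi => by rw [coeff_map, coeff_f_eq_zero_of_not_dvd (by norm_num) 2 hi, map_zero])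
    (fun n => by rw [← map_mul]; exact coeff_map_mul_f_eq_zero a ha n) n
  rw [coeff_map, coeff_mk] at h
  exact (ZMod.intCast_zmod_eq_zero_iff_dvd _ 7).1 h
end

section
/- Euler's pentagonal number theorem: as formal power series, ∏_{n≥1}(1-q^n) = ∑_{n∈ℤ} (-1)^n q^{n(3n+1)/2}. -/
open PowerSeries Finset

section CoeffStability

variable {R : Type*} [CommRing R]

theorem PowerSeries.coeff_mul_of_X_pow_dvd_sub_one {φ ψ : R⟦X⟧} {n : ℕ}
    (h : X ^ (n + 1) ∣ ψ - 1) : coeff n (φ * ψ) = coeff n φ := by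
  obtain ⟨g, hg⟩ := h
  rw [show ψ = 1 + X ^ (n + 1) * g by rw [← hg]; ring, mul_add, mul_one, mul_left_comm,
    map_add, coeff_X_pow_mul', if_neg (by omega), add_zero]

theorem PowerSeries.X_pow_dvd_prod_one_sub_X_pow_sub_one {ι : Type*} {s : Finset ι} {e : ι → ℕ}
    {n : ℕ} (hs : ∀ i ∈ s, n ≤ e i) : (X : R⟦X⟧) ^ n ∣ ∏ i ∈ s, (1 - X ^ e i) - 1 := by
  refine prod_induction _ (fun a => X ^ n ∣ a - 1) (fun a b ha hb => ?_) (by simp)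
    (fun i hi => ?_)
  · rw [show a * b - 1 = a * (b - 1) + (a - 1) by ring]
    exact dvd_add (dvd_mul_of_dvd_right hb a) ha
  · rw [sub_sub_cancel_left, dvd_neg]
    exact pow_dvd_pow X (hs i hi)

theorem PowerSeries.coeff_prod_one_sub_X_pow_succ_of_range_subset {n : ℕ} {s : Finset ℕ}
    (hs : range (n + 1) ⊆ s) :
    coeff n (∏ k ∈ s, (1 - X ^ (k + 1) : R⟦X⟧)) =
      coeff n (∏ k ∈ range (n + 1), (1 - X ^ (k + 1) : R⟦X⟧)) := by
  rw [← prod_sdiff hs, mul_comm]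
  refine coeff_mul_of_X_pow_dvd_sub_one (X_pow_dvd_prod_one_sub_X_pow_sub_one fun k hk => ?_)
  have := (mem_sdiff.mp hk).2
  rw [mem_range] at this
  omega

theorem PowerSeries.coeff_prod_range_one_sub_X_pow_succ (n : ℕ) :
    coeff n (∏ k ∈ range (n + 1), (1 - X ^ (k + 1) : R⟦X⟧)) = coeff n (pentagonalSeries R) := by
  obtain ⟨s, hs⟩ := Filter.eventually_atTop.mp (coeff_prod_one_sub_X_pow_eventually_eq R n)
  rw [← hs (s ∪ range (n + 1)) subset_union_left,
    coeff_prod_one_sub_X_pow_succ_of_range_subset subset_union_right]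

end CoeffStability

theorem natAbs_le_pentagonal (k : ℤ) : k.natAbs ≤ pentagonal k := by
  have h := two_mul_natCast_pentagonal k
  zify
  rcases abs_cases k with ⟨hk, -⟩ | ⟨hk, -⟩ <;> rw [hk] <;> nlinarith

theorem mul_three_mul_add_one_eq_two_mul_iff {n : ℤ} {N : ℕ} :
    n * (3 * n + 1) = 2 * (N : ℤ) ↔ pentagonal (-n) = N := by
  rw [← two_mul_natCast_pentagonal_neg]
  omega

theorem PowerSeries.coeff_pentagonalSeries_eq_sum (R : Type*) [CommRing R] (N : ℕ) :
    coeff N (pentagonalSeries R) = ∑ n ∈ Icc (-(N : ℤ)) N,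
      if n * (3 * n + 1) = 2 * (N : ℤ) then ((n.negOnePow : ℤ) : R) else 0 := by
  simp_rw [mul_three_mul_add_one_eq_two_mul_iff]
  by_cases hN : ∃ k, pentagonal k = N
  · obtain ⟨k, rfl⟩ := hN
    have hk := natAbs_le_pentagonal k
    rw [sum_eq_single (-k) (fun n _ hn => if_neg fun h => hn (by rw [← pentagonal_inj.mp h, neg_neg]))
      (fun hk' => absurd (mem_Icc.mpr ⟨by omega, by omega⟩) hk'), neg_neg, if_pos rfl,
      Int.negOnePow_neg, coeff_pentagonalSeries_pentagonal]
  · rw [coeff_pentagonalSeries_eq_zero R (by simpa using hN)]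
    exact (sum_eq_zero fun n _ => if_neg fun h => hN ⟨-n, h⟩).symm

/-- Euler's pentagonal number theorem: `∏_{n≥1}(1-q^n) = ∑_{n ∈ ℤ} (-1)^n q^{n(3n+1)/2}`.
The `N`-th coefficient of the bilateral sum is `∑_{n ∈ ℤ, n(3n+1)/2 = N} (-1)^n`; all such
`n` satisfy `|n| ≤ N`, so the sum may be taken over `Finset.Icc (-N) N`. -/
theorem statement4 :
    f 1 = PowerSeries.mk fun N =>
      ∑ n ∈ Finset.Icc (-(N : ℤ)) (N : ℤ),
        if n * (3 * n + 1) = 2 * (N : ℤ) then (n.negOnePow : ℤ) else 0 := by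
  ext N
  simp only [f, one_mul, coeff_mk, coeff_prod_range_one_sub_X_pow_succ,
    coeff_pentagonalSeries_eq_sum, Int.cast_id]
end

section
/- Let p ≡ 5 or 7 (mod 8) be prime and 0 ≤ l ≤ p-1 with p | 8l+3. If integers m, n satisfy 3m^2 + 2m + n(3n+1)/2 ≡ l (mod p), then p | (3m+1) and p | (6n+1). -/
theorem eq_zero_of_two_mul_sq_add_sq_eq_zero {F : Type*} [Field F] (hF : ¬IsSquare (-2 : F))
    {x y : F} (h : 2 * x ^ 2 + y ^ 2 = 0) : x = 0 ∧ y = 0 := by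
  have hx : x = 0 := by
    by_contra hx
    exact hF ⟨y / x, by field_simp; linear_combination -h⟩
  subst hx
  exact ⟨rfl, pow_eq_zero_iff two_ne_zero |>.mp (by simpa using h)⟩

theorem Int.dvd_and_dvd_of_dvd_two_mul_sq_add_sq {p : ℕ} [Fact p.Prime]
    (hp : ¬IsSquare (-2 : ZMod p)) {x y : ℤ} (h : (p : ℤ) ∣ 2 * x ^ 2 + y ^ 2) :
    (p : ℤ) ∣ x ∧ (p : ℤ) ∣ y := by
  simp only [← ZMod.intCast_zmod_eq_zero_iff_dvd] at h ⊢
  push_cast at h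
  exact eq_zero_of_two_mul_sq_add_sq_eq_zero hp h

theorem Int.two_dvd_mul_three_mul_add_one (n : ℤ) : 2 ∣ n * (3 * n + 1) := by
  have h : n * (3 * n + 1) = n * (n + 1) + 2 * n ^ 2 := by ring
  rw [h, ← even_iff_two_dvd]
  exact (Int.even_mul_succ_self n).add (even_two_mul _)

theorem Int.dvd_completed_squares {d m n l : ℤ}
    (h : d ∣ 3 * m ^ 2 + 2 * m + n * (3 * n + 1) / 2 - l) (hl : d ∣ 8 * l + 3) :
    d ∣ 2 * (6 * m + 2) ^ 2 + (6 * n + 1) ^ 2 := by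
  have hhalf : 2 * (n * (3 * n + 1) / 2) = n * (3 * n + 1) :=
    Int.mul_ediv_cancel' (Int.two_dvd_mul_three_mul_add_one n)
  have hcomplete : 2 * (6 * m + 2) ^ 2 + (6 * n + 1) ^ 2
      = 24 * (3 * m ^ 2 + 2 * m + n * (3 * n + 1) / 2 - l) + 3 * (8 * l + 3) := by
    linear_combination (-12) * hhalf
  rw [hcomplete]
  exact dvd_add (h.mul_left 24) (hl.mul_left 3)

theorem statement15_general (p : ℕ) (hp : p.Prime) (hp8 : p % 8 = 5 ∨ p % 8 = 7)
    (l : ℕ) (hdl : p ∣ 8 * l + 3)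
    (m n : ℤ)
    (h : (p : ℤ) ∣ (3 * m ^ 2 + 2 * m + n * (3 * n + 1) / 2 - (l : ℤ))) :
    (p : ℤ) ∣ 3 * m + 1 ∧ (p : ℤ) ∣ 6 * n + 1 := by
  have : Fact p.Prime := ⟨hp⟩
  have hp2 : p ≠ 2 := by rintro rfl; omega
  have hns : ¬IsSquare (-2 : ZMod p) := by
    rw [ZMod.exists_sq_eq_neg_two_iff hp2]
    omega
  have hdl' : (p : ℤ) ∣ 8 * l + 3 := by exact_mod_cast hdl
  obtain ⟨hm, hn⟩ :=
    Int.dvd_and_dvd_of_dvd_two_mul_sq_add_sq hns (Int.dvd_completed_squares h hdl')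
  have hp2' : ¬(p : ℤ) ∣ 2 := by
    exact_mod_cast fun hd => hp2 ((Nat.prime_dvd_prime_iff_eq hp Nat.prime_two).mp hd)
  refine ⟨?_, hn⟩
  rw [show 6 * m + 2 = 2 * (3 * m + 1) by ring] at hm
  exact ((Nat.prime_iff_prime_int.mp hp).dvd_or_dvd hm).resolve_left hp2'

theorem statement15 (p : ℕ) (hp : p.Prime) (hp8 : p % 8 = 5 ∨ p % 8 = 7)
    (l : ℕ) (hl : l ≤ p - 1) (hdl : p ∣ 8 * l + 3)
    (m n : ℤ)
    (h : (p : ℤ) ∣ (3 * m ^ 2 + 2 * m + n * (3 * n + 1) / 2 - (l : ℤ))) :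
    (p : ℤ) ∣ 3 * m + 1 ∧ (p : ℤ) ∣ 6 * n + 1 :=
  statement15_general p hp hp8 l hdl m n h
end
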